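/- arXiv:2601.05943 — 3 statements merged into one kernel-verified Lean document; each statement's English description precedes it below -/
import Mathlib

section
/- For any 4 distinct points in the plane, the ratio of the maximum to the minimum pairwise distance is at least √2, i.e., the maximum squared pairwise distance is at least twice the minimum squared pairwise distance. -/
noncomputable abbrev E2 := EuclideanSpace ℝ (Fin 2)


open RealInnerProductSpace in
lemma lemA (j p q r : E2) (s t u : ℝ) (hs : 0 ≤ s) (ht : 0 ≤ t) (hu : 0 ≤ u)
    (hsum : 0 < s + t + u)
    (heq : s • (p - j) + t • (q - j) + u • (r - j) = 0)
    (hp : p ≠ j) (hq : q ≠ j) (hr : r ≠ j) :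
    ⟪p - j, q - j⟫ ≤ 0 ∨ ⟪p - j, r - j⟫ ≤ 0 ∨ ⟪q - j, r - j⟫ ≤ 0 := by
  by_contra hcon
  push_neg at hcon
  obtain ⟨h1, h2, h3⟩ := hcon
  have hp' : (0:ℝ) < ⟪p - j, p - j⟫ := by
    have h0 : 0 < ‖p - j‖ := by simp [sub_ne_zero, hp]
    rw [real_inner_self_eq_norm_sq]; positivity
  have hq' : (0:ℝ) < ⟪q - j, q - j⟫ := by
    have h0 : 0 < ‖q - j‖ := by simp [sub_ne_zero, hq]
    rw [real_inner_self_eq_norm_sq]; positivity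
  have hr' : (0:ℝ) < ⟪r - j, r - j⟫ := by
    have h0 : 0 < ‖r - j‖ := by simp [sub_ne_zero, hr]
    rw [real_inner_self_eq_norm_sq]; positivity
  rcases lt_trichotomy s 0 with h | h | h
  · linarith
  · rcases lt_trichotomy t 0 with h' | h' | h'
    · linarith
    · -- u > 0, take inner with r - j
      have e := congrArg (fun z => ⟪z, r - j⟫) heq
      simp only [inner_add_left, real_inner_smul_left, inner_zero_left] at e
      have hu' : 0 < u := by linarith
      nlinarith [real_inner_comm (p - j) (r - j), real_inner_comm (q - j) (r - j)]
    · have e := congrArg (fun z => ⟪z, q - j⟫) heq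
      simp only [inner_add_left, real_inner_smul_left, inner_zero_left] at e
      nlinarith [real_inner_comm (p - j) (q - j), real_inner_comm (r - j) (q - j)]
  · have e := congrArg (fun z => ⟪z, p - j⟫) heq
    simp only [inner_add_left, real_inner_smul_left, inner_zero_left] at e
    nlinarith [real_inner_comm (q - j) (p - j), real_inner_comm (r - j) (p - j)]


open RealInnerProductSpace in
lemma lemB (a b p q : E2) (α β γ δ s : ℝ) (hα : 0 < α) (hβ : 0 < β) (hγ : 0 < γ)
    (hδ : 0 < δ) (hab : α + β = s) (hpq : γ + δ = s)
    (heq : α • a + β • b = γ • p + δ • q) :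
    ⟪p - a, q - a⟫ ≤ 0 ∨ ⟪p - b, q - b⟫ ≤ 0 ∨ ⟪a - p, b - p⟫ ≤ 0 ∨ ⟪a - q, b - q⟫ ≤ 0 := by
  by_contra hcon
  push_neg at hcon
  obtain ⟨h1, h2, h3, h4⟩ := hcon
  have hs : 0 < s := by linarith
  set u := a - b with hu
  set v := p - q with hv
  have e1 : s • (p - a) = δ • v - β • u := by
    rw [hu, hv]; linear_combination (norm := module) -heq - hpq • p + hab • a
  have e2 : s • (q - a) = -(γ • v) - β • u := by
    rw [hu, hv]; linear_combination (norm := module) -heq - hpq • q + hab • a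
  have e3 : s • (p - b) = δ • v + α • u := by
    rw [hu, hv]; linear_combination (norm := module) -heq - hpq • p + hab • b
  have e4 : s • (q - b) = -(γ • v) + α • u := by
    rw [hu, hv]; linear_combination (norm := module) -heq - hpq • q + hab • b
  set U := ⟪u, u⟫ with hU
  set V := ⟪v, v⟫ with hV
  set C := ⟪u, v⟫ with hC
  have hvu : ⟪v, u⟫ = C := by rw [hC]; exact real_inner_comm u v
  have g1 : (0:ℝ) < β^2*U - γ*δ*V + β*(γ-δ)*C := by
    have : (0:ℝ) < ⟪s • (p - a), s • (q - a)⟫ := by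
      rw [real_inner_smul_left, real_inner_smul_right]
      exact mul_pos hs (mul_pos hs h1)
    rw [e1, e2] at this
    simp only [inner_sub_left, inner_sub_right, inner_neg_left, inner_neg_right,
      real_inner_smul_left, real_inner_smul_right, hvu, ← hU, ← hV, ← hC] at this
    linarith [this]
  have g2 : (0:ℝ) < α^2*U - γ*δ*V + α*(δ-γ)*C := by
    have : (0:ℝ) < ⟪s • (p - b), s • (q - b)⟫ := by
      rw [real_inner_smul_left, real_inner_smul_right]
      exact mul_pos hs (mul_pos hs h2)
    rw [e3, e4] at this
    simp only [inner_add_left, inner_add_right, inner_neg_left, inner_neg_right,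
      real_inner_smul_left, real_inner_smul_right, hvu, ← hU, ← hV, ← hC] at this
    linarith [this]
  have g3 : (0:ℝ) < δ^2*V - α*β*U + δ*(α-β)*C := by
    have : (0:ℝ) < ⟪s • (a - p), s • (b - p)⟫ := by
      rw [real_inner_smul_left, real_inner_smul_right]
      exact mul_pos hs (mul_pos hs h3)
    have e1' : s • (a - p) = β • u - δ • v := by
      rw [smul_sub] at e1 ⊢; rw [← neg_sub (s • p), e1]; abel
    have e3' : s • (b - p) = -(α • u) - δ • v := by
      rw [smul_sub] at e3 ⊢; rw [← neg_sub (s • p), e3]; abel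
    rw [e1', e3'] at this
    simp only [inner_sub_left, inner_sub_right, inner_neg_left, inner_neg_right,
      real_inner_smul_left, real_inner_smul_right, hvu, ← hU, ← hV, ← hC] at this
    linarith [this]
  have g4 : (0:ℝ) < γ^2*V - α*β*U + γ*(β-α)*C := by
    have : (0:ℝ) < ⟪s • (a - q), s • (b - q)⟫ := by
      rw [real_inner_smul_left, real_inner_smul_right]
      exact mul_pos hs (mul_pos hs h4)
    have e2' : s • (a - q) = β • u + γ • v := by
      rw [smul_sub] at e2 ⊢; rw [← neg_sub (s • q), e2]; abel
    have e4' : s • (b - q) = -(α • u) + γ • v := by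
      rw [smul_sub] at e4 ⊢; rw [← neg_sub (s • q), e4]; abel
    rw [e2', e4'] at this
    simp only [inner_add_left, inner_add_right, inner_sub_left, inner_sub_right,
      inner_neg_left, inner_neg_right,
      real_inner_smul_left, real_inner_smul_right, hvu, ← hU, ← hV, ← hC] at this
    linarith [this]
  have hA : (0:ℝ) < α * β * U - γ * δ * V := by
    have h12 : (0:ℝ) < α * (β^2*U - γ*δ*V + β*(γ-δ)*C) + β * (α^2*U - γ*δ*V + α*(δ-γ)*C) :=
      by have := mul_pos hα g1; have := mul_pos hβ g2; linarith
    have hr : α * (β^2*U - γ*δ*V + β*(γ-δ)*C) + β * (α^2*U - γ*δ*V + α*(δ-γ)*C)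
        = (α + β) * (α * β * U - γ * δ * V) := by ring
    rw [hr] at h12
    by_contra h'
    push_neg at h'
    linarith [mul_nonneg (by linarith : (0:ℝ) ≤ α + β) (neg_nonneg.2 h')]
  have hB : (0:ℝ) < γ * δ * V - α * β * U := by
    have h34 : (0:ℝ) < γ * (δ^2*V - α*β*U + δ*(α-β)*C) + δ * (γ^2*V - α*β*U + γ*(β-α)*C) :=
      by have := mul_pos hγ g3; have := mul_pos hδ g4; linarith
    have hr : γ * (δ^2*V - α*β*U + δ*(α-β)*C) + δ * (γ^2*V - α*β*U + γ*(β-α)*C)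
        = (γ + δ) * (γ * δ * V - α * β * U) := by ring
    rw [hr] at h34
    by_contra h'
    push_neg at h'
    linarith [mul_nonneg (by linarith : (0:ℝ) ≤ γ + δ) (neg_nonneg.2 h')]
  linarith

open RealInnerProductSpace in
lemma exists_nonacute (x : Fin 4 → E2) (hx : Function.Injective x) :
    ∃ i j k : Fin 4, i ≠ j ∧ k ≠ j ∧ i ≠ k ∧ ⟪x i - x j, x k - x j⟫ ≤ 0 := by
  -- linear dependence of the three difference vectors
  have hfr : Module.finrank ℝ E2 = 2 := finrank_euclideanSpace_fin
  have hnli : ¬ LinearIndependent ℝ ![x 1 - x 0, x 2 - x 0, x 3 - x 0] := by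
    intro h
    have := h.fintype_card_le_finrank
    rw [hfr] at this
    simp at this
  obtain ⟨g, hg, i0, hi0⟩ := Fintype.not_linearIndependent_iff.mp hnli
  set w : Fin 4 → ℝ := ![-(g 0 + g 1 + g 2), g 0, g 1, g 2] with hw
  have hsumw : w 0 + w 1 + w 2 + w 3 = 0 := by simp [hw]; ring
  have hvecw : w 0 • x 0 + w 1 • x 1 + w 2 • x 2 + w 3 • x 3 = 0 := by
    rw [Fin.sum_univ_three] at hg
    simp only [hw, Matrix.cons_val_zero, Matrix.cons_val_one, Matrix.head_cons,
      Matrix.cons_val_two, Matrix.tail_cons, Matrix.cons_val_three] at hg ⊢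
    linear_combination (norm := module) hg
  have hwne : ∃ i, w i ≠ 0 := by
    refine ⟨i0.succ, ?_⟩
    fin_cases i0 <;> simpa [hw] using hi0
  -- sort the weights
  set σ := Tuple.sort w with hσ
  set y : Fin 4 → E2 := x ∘ σ with hy
  set w' : Fin 4 → ℝ := w ∘ σ with hw'
  have hmono : Monotone w' := Tuple.monotone_sort w
  have hsum' : w' 0 + w' 1 + w' 2 + w' 3 = 0 := by
    have : ∑ i, w' i = ∑ i, w i := Equiv.sum_comp σ w
    rw [Fin.sum_univ_four, Fin.sum_univ_four] at this
    linarith [this, hsumw]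
  have hvec' : w' 0 • y 0 + w' 1 • y 1 + w' 2 • y 2 + w' 3 • y 3 = 0 := by
    have : ∑ i, w' i • y i = ∑ i, w i • x i := Equiv.sum_comp σ (fun i => w i • x i)
    rw [Fin.sum_univ_four, Fin.sum_univ_four] at this
    rw [this]
    exact hvecw
  have h01 : w' 0 ≤ w' 1 := hmono (by decide)
  have h12 : w' 1 ≤ w' 2 := hmono (by decide)
  have h23 : w' 2 ≤ w' 3 := hmono (by decide)
  have hkey : w' 0 < 0 ∧ 0 < w' 3 := by
    obtain ⟨i, hi⟩ := hwne
    have hi' : w' (σ.symm i) ≠ 0 := by simpa [hw'] using hi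
    have hlow : w' 0 ≤ w' (σ.symm i) := hmono (Fin.zero_le _)
    have hhigh : w' (σ.symm i) ≤ w' 3 := hmono (Fin.le_last _)
    rcases lt_or_gt_of_ne hi' with h | h
    · constructor <;> linarith
    · constructor <;> linarith
  obtain ⟨hn0, hp3⟩ := hkey
  have hyne : ∀ i j : Fin 4, i ≠ j → y i ≠ y j := by
    intro i j hij
    simp only [hy, Function.comp_apply]
    exact fun h => hij (σ.injective (hx h))
  have hfin : ∀ i j k : Fin 4, i ≠ j → k ≠ j → i ≠ k → ⟪y i - y j, y k - y j⟫ ≤ 0 →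
      ∃ i j k : Fin 4, i ≠ j ∧ k ≠ j ∧ i ≠ k ∧ ⟪x i - x j, x k - x j⟫ ≤ 0 := by
    intro i j k hij hkj hik h
    exact ⟨σ i, σ j, σ k, σ.injective.ne hij, σ.injective.ne hkj, σ.injective.ne hik, h⟩
  rcases le_or_gt 0 (w' 1) with hc1 | hc1
  · -- y 0 is a convex combination of the others
    have heq : w' 1 • (y 1 - y 0) + w' 2 • (y 2 - y 0) + w' 3 • (y 3 - y 0) = 0 := by
      linear_combination (norm := module) hvec' - hsum' • y 0
    rcases lemA (y 0) (y 1) (y 2) (y 3) _ _ _ hc1 (by linarith) (by linarith) (by linarith) heq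
        (hyne 1 0 (by decide)) (hyne 2 0 (by decide)) (hyne 3 0 (by decide)) with h | h | h
    · exact hfin 1 0 2 (by decide) (by decide) (by decide) h
    · exact hfin 1 0 3 (by decide) (by decide) (by decide) h
    · exact hfin 2 0 3 (by decide) (by decide) (by decide) h
  rcases le_or_gt (w' 2) 0 with hc2 | hc2
  · -- y 3 is a convex combination of the others
    have heq : (-w' 0) • (y 0 - y 3) + (-w' 1) • (y 1 - y 3) + (-w' 2) • (y 2 - y 3) = 0 := by
      linear_combination (norm := module) -hvec' + hsum' • y 3
    rcases lemA (y 3) (y 0) (y 1) (y 2) _ _ _ (by linarith) (by linarith) (by linarith)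
        (by linarith) heq
        (hyne 0 3 (by decide)) (hyne 1 3 (by decide)) (hyne 2 3 (by decide)) with h | h | h
    · exact hfin 0 3 1 (by decide) (by decide) (by decide) h
    · exact hfin 0 3 2 (by decide) (by decide) (by decide) h
    · exact hfin 1 3 2 (by decide) (by decide) (by decide) h
  · -- crossing case
    have heq : w' 2 • y 2 + w' 3 • y 3 = (-w' 0) • y 0 + (-w' 1) • y 1 := by
      linear_combination (norm := module) hvec'
    rcases lemB (y 2) (y 3) (y 0) (y 1) (w' 2) (w' 3) (-w' 0) (-w' 1) (w' 2 + w' 3)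
        hc2 (by linarith) (by linarith) (by linarith) rfl (by linarith) heq with h | h | h | h
    · exact hfin 0 2 1 (by decide) (by decide) (by decide) h
    · exact hfin 0 3 1 (by decide) (by decide) (by decide) h
    · exact hfin 2 0 3 (by decide) (by decide) (by decide) h
    · exact hfin 2 1 3 (by decide) (by decide) (by decide) h

/-- For 4 distinct points in the plane the max/min distance ratio is at least √2,
i.e. the maximum squared distance is at least twice the minimum squared distance. -/
theorem stmt_5 (x : Fin 4 → E2) (hx : Function.Injective x) :
    Real.sqrt 2 ≤ sSup {r | ∃ i j : Fin 4, i < j ∧ r = dist (x i) (x j)} /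
        sInf {r | ∃ i j : Fin 4, i < j ∧ r = dist (x i) (x j)} ∧
    2 * sInf {r | ∃ i j : Fin 4, i < j ∧ r = dist (x i) (x j)} ^ 2 ≤
      sSup {r | ∃ i j : Fin 4, i < j ∧ r = dist (x i) (x j)} ^ 2 := by
  set S := {r | ∃ i j : Fin 4, i < j ∧ r = dist (x i) (x j)} with hS
  have hfin : S.Finite := by
    apply (Set.finite_range (fun p : Fin 4 × Fin 4 => dist (x p.1) (x p.2))).subset
    rintro r ⟨i, j, -, rfl⟩
    exact ⟨(i, j), rfl⟩
  have hne : S.Nonempty := ⟨dist (x 0) (x 1), 0, 1, by decide, rfl⟩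
  have hmem : ∀ i j : Fin 4, i ≠ j → dist (x i) (x j) ∈ S := by
    intro i j h
    rcases h.lt_or_gt with h' | h'
    · exact ⟨i, j, h', rfl⟩
    · exact ⟨j, i, h', dist_comm (x i) (x j)⟩
  have hdmem : sInf S ∈ S := hne.csInf_mem hfin
  have hDmem : sSup S ∈ S := hne.csSup_mem hfin
  have hd0 : 0 < sInf S := by
    obtain ⟨i, j, hij, h⟩ := hdmem
    rw [h]
    exact dist_pos.2 (hx.ne (ne_of_lt hij))
  have hD0 : 0 ≤ sSup S := by
    obtain ⟨i, j, hij, h⟩ := hDmem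
    rw [h]; exact dist_nonneg
  obtain ⟨i, j, k, hij, hkj, hik, hinner⟩ := exists_nonacute x hx
  have pyth : dist (x i) (x j) ^ 2 + dist (x k) (x j) ^ 2 ≤ dist (x i) (x k) ^ 2 := by
    have h1 : dist (x i) (x k) ^ 2
        = ‖x i - x j‖ ^ 2 - 2 * inner (𝕜 := ℝ) (x i - x j) (x k - x j) + ‖x k - x j‖ ^ 2 := by
      rw [dist_eq_norm, ← sub_sub_sub_cancel_right (x i) (x k) (x j), norm_sub_sq_real]
    rw [dist_eq_norm (x i) (x j), dist_eq_norm (x k) (x j), h1]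
    linarith
  have hle1 : sInf S ≤ dist (x i) (x j) := csInf_le hfin.bddBelow (hmem i j hij)
  have hle2 : sInf S ≤ dist (x k) (x j) := csInf_le hfin.bddBelow (hmem k j hkj)
  have hle3 : dist (x i) (x k) ≤ sSup S := le_csSup hfin.bddAbove (hmem i k hik)
  have hsq1 : sInf S ^ 2 ≤ dist (x i) (x j) ^ 2 := pow_le_pow_left₀ hd0.le hle1 2
  have hsq2 : sInf S ^ 2 ≤ dist (x k) (x j) ^ 2 := pow_le_pow_left₀ hd0.le hle2 2
  have hsq3 : dist (x i) (x k) ^ 2 ≤ sSup S ^ 2 := pow_le_pow_left₀ dist_nonneg hle3 2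
  have hmain : 2 * sInf S ^ 2 ≤ sSup S ^ 2 := by linarith
  refine ⟨?_, hmain⟩
  rw [le_div_iff₀ hd0]
  have h2 : Real.sqrt (2 * sInf S ^ 2) ≤ Real.sqrt (sSup S ^ 2) := Real.sqrt_le_sqrt hmain
  rwa [Real.sqrt_mul (by norm_num) , Real.sqrt_sq hd0.le, Real.sqrt_sq hD0] at h2
end

section
/- Converse Farkas separation for bounded polygons: if P and Q are compact convex polyhedra in ℝ² defined by finitely many linear inequalities and their interiors are disjoint, then there exist nonnegative multipliers on the combined inequality system, summing to 1, whose aggregated inequality is infeasible (aggregated normal vector is zero while the aggregated right-hand side is ≥ 0). -/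
/-!
Disjoint interiors means that the joint strict system `c i < ⟪a i, p⟫`, `d j < ⟪b j, p⟫` has
no solution. Writing any such infeasible system as `c i < ⟪a i, p⟫` and homogenising, no
continuous functional is positive on all the vectors `(a i, -c i)` and `(0, 1)` of `F × ℝ`;
separating `0` from their (compact) convex hull shows that `0` is a convex combination of them
(Gordan's alternative). The weight on `(0, 1)` cannot carry all the mass, and rescaling the
remaining weights gives the certificate.
-/

open RealInnerProductSpace

theorem exists_mem_stdSimplex_sum_smul_eq_zero {E : Type*} [NormedAddCommGroup E]
    [NormedSpace ℝ E] {κ : Type*} [Fintype κ] (u : κ → E)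
    (h : ∀ f : StrongDual ℝ E, ∃ k, f (u k) ≤ 0) :
    ∃ w ∈ stdSimplex ℝ κ, ∑ k, w k • u k = 0 := by
  classical
  set L := Fintype.linearCombination ℝ u
  by_contra! hw
  have h0 : (0 : E) ∉ L '' stdSimplex ℝ κ := by
    rintro ⟨w, hwS, hLw⟩
    exact hw w hwS (by simpa [L, Fintype.linearCombination_apply] using hLw)
  obtain ⟨f, s, hf, hs⟩ := geometric_hahn_banach_closed_point
    ((convex_stdSimplex ℝ κ).linear_image L)
    ((isCompact_stdSimplex ℝ κ).image L.continuous_of_finiteDimensional).isClosed h0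
  obtain ⟨k, hk⟩ := h (-f)
  have hfk := hf (u k) ⟨Pi.single k 1, single_mem_stdSimplex ℝ k, by simp [L]⟩
  simp only [map_zero, neg_apply, neg_nonpos] at hs hk
  linarith

section InnerProductSpace

variable {F : Type*} [NormedAddCommGroup F] [InnerProductSpace ℝ F] [CompleteSpace F]
  {ι : Type*} (a : ι → F) (c : ι → ℝ)

theorem exists_apply_nonpos_of_forall_exists_inner_le (h : ∀ p, ∃ i, ⟪a i, p⟫ ≤ c i)
    (f : StrongDual ℝ (F × ℝ)) : ∃ o : Option ι, f (o.elim (0, 1) fun i => (a i, -c i)) ≤ 0 := by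
  by_contra! hf
  set β := f (0, 1)
  set v := (InnerProductSpace.toDual ℝ F).symm (f.comp (ContinuousLinearMap.inl ℝ F ℝ))
  have hβ : 0 < β := hf none
  obtain ⟨i, hi⟩ := h (β⁻¹ • v)
  have hv : ⟪a i, v⟫ = f (a i, 0) := by
    rw [real_inner_comm, InnerProductSpace.toDual_symm_apply]; rfl
  have hfi : f (a i, -c i) = ⟪a i, v⟫ - c i * β := by
    have hsplit : ((a i, -c i) : F × ℝ) = (a i, 0) + (-c i) • (0, 1) := by simp
    rw [hv, hsplit, map_add, map_smul, smul_eq_mul]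
    ring
  have hpos : 0 < f (a i, -c i) := hf (some i)
  rw [real_inner_smul_right, inv_mul_le_iff₀ hβ] at hi
  linarith

variable [Fintype ι]

theorem exists_mem_stdSimplex_of_forall_exists_inner_le (h : ∀ p, ∃ i, ⟪a i, p⟫ ≤ c i) :
    ∃ l ∈ stdSimplex ℝ ι, ∑ i, l i • a i = 0 ∧ 0 ≤ ∑ i, l i * c i := by
  obtain ⟨w, ⟨hw0, hw1⟩, hwu⟩ := exists_mem_stdSimplex_sum_smul_eq_zero _
    (exists_apply_nonpos_of_forall_exists_inner_le a c h)
  rw [Fintype.sum_option] at hw1 hwu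
  have hfst := congrArg Prod.fst hwu
  have hsnd := congrArg Prod.snd hwu
  simp only [Option.elim_none, Option.elim_some, Prod.smul_mk, smul_zero, smul_eq_mul, mul_one,
    mul_neg, Prod.fst_add, Prod.fst_sum, Prod.fst_zero, zero_add, Prod.snd_add, Prod.snd_sum,
    Finset.sum_neg_distrib, Prod.snd_zero] at hfst hsnd
  set s := ∑ i, w (some i)
  have hs : 0 < s := by
    refine (Finset.sum_nonneg fun i _ => hw0 (some i)).lt_of_ne fun hs0 => ?_
    have hzero := (Finset.sum_eq_zero_iff_of_nonneg fun i _ => hw0 (some i)).mp hs0.symm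
    have hwc : ∑ i, w (some i) * c i = 0 :=
      Finset.sum_eq_zero fun i hi => by rw [hzero i hi, zero_mul]
    linarith
  refine ⟨fun i => w (some i) / s, ⟨fun i => div_nonneg (hw0 _) hs.le, ?_⟩, ?_, ?_⟩
  · rw [← Finset.sum_div, div_self hs.ne']
  · simp_rw [div_eq_inv_mul, mul_smul, ← Finset.smul_sum, hfst, smul_zero]
  · simp_rw [div_eq_inv_mul, mul_assoc, ← Finset.mul_sum]
    exact mul_nonneg (inv_nonneg.mpr hs.le) (by linarith [hw0 none])

end InnerProductSpace

theorem stmt_13_general (m k : ℕ) (a : Fin m → E2) (b : Fin k → E2) (c : Fin m → ℝ) (d : Fin k → ℝ)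
    (hdisj : Disjoint {p : E2 | ∀ i, c i < ⟪a i, p⟫} {p : E2 | ∀ j, d j < ⟪b j, p⟫}) :
    ∃ (lam : Fin m → ℝ) (mu : Fin k → ℝ),
      (∀ i, 0 ≤ lam i) ∧ (∀ j, 0 ≤ mu j) ∧
      (∑ i, lam i) + (∑ j, mu j) = 1 ∧
      ∑ i, lam i • a i + ∑ j, mu j • b j = 0 ∧
      0 ≤ ∑ i, lam i * c i + ∑ j, mu j * d j := by
  have hno_strict : ∀ p, ∃ x, ⟪Sum.elim a b x, p⟫ ≤ Sum.elim c d x := by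
    intro p
    by_contra! hp
    exact Set.disjoint_left.mp hdisj (fun i => hp (.inl i)) (fun j => hp (.inr j))
  obtain ⟨l, ⟨hl0, hl1⟩, hla, hlc⟩ :=
    exists_mem_stdSimplex_of_forall_exists_inner_le (Sum.elim a b) (Sum.elim c d) hno_strict
  rw [Fintype.sum_sum_type] at hl1 hla hlc
  exact ⟨l ∘ Sum.inl, l ∘ Sum.inr, fun i => hl0 _, fun j => hl0 _, hl1, hla, hlc⟩

/-- Converse Farkas separation for bounded polyhedra: if two nonempty compact polyhedra
have disjoint interiors, a Farkas certificate with multipliers summing to 1 exists. -/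
theorem stmt_13 (m k : ℕ) (a : Fin m → E2) (b : Fin k → E2) (c : Fin m → ℝ) (d : Fin k → ℝ)
    (hPne : {p : E2 | ∀ i, c i ≤ ⟪a i, p⟫}.Nonempty)
    (hQne : {p : E2 | ∀ j, d j ≤ ⟪b j, p⟫}.Nonempty)
    (hPcpt : IsCompact {p : E2 | ∀ i, c i ≤ ⟪a i, p⟫})
    (hQcpt : IsCompact {p : E2 | ∀ j, d j ≤ ⟪b j, p⟫})
    (hdisj : Disjoint {p : E2 | ∀ i, c i < ⟪a i, p⟫} {p : E2 | ∀ j, d j < ⟪b j, p⟫}) :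
    ∃ (lam : Fin m → ℝ) (mu : Fin k → ℝ),
      (∀ i, 0 ≤ lam i) ∧ (∀ j, 0 ≤ mu j) ∧
      (∑ i, lam i) + (∑ j, mu j) = 1 ∧
      ∑ i, lam i • a i + ∑ j, mu j • b j = 0 ∧
      0 ≤ ∑ i, lam i * c i + ∑ j, mu j * d j :=
  stmt_13_general m k a b c d hdisj
end

section
/- Half-space representation of the rotated unit hexagon: the regular hexagon with unit side length, center (x₀, y₀) and rotation angle θ equals the set of points p ∈ ℝ² satisfying, for each j ∈ {0,…,5}, (sin(θ + jπ/3), cos(θ + jπ/3)) · p ≤ (sin(θ + jπ/3), cos(θ + jπ/3)) · (x₀, y₀) + √3/2. -/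
noncomputable def pt (a b : ℝ) : E2 := WithLp.toLp 2 ![a, b]
/-- Regular hexagon with center c, rotation angle θ and side length s. -/
noncomputable def hexagon (c : E2) (θ s : ℝ) : Set E2 :=
  convexHull ℝ (Set.range fun j : Fin 6 =>
    c + s • pt (Real.sin (θ + ((j : ℝ) + 0.5) * (Real.pi / 3)))
               (Real.cos (θ + ((j : ℝ) + 0.5) * (Real.pi / 3))))

/-!
Normal `j` and vertex `k` of the hexagon make the angle `(j - k) π/3 - π/6`, whose cosine is a
root of `4t³ - 3t = cos 3x = 0`, hence at most `√3/2`; as the half-planes cut out a convex set, the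
hexagon lies in it. Conversely, the rotation-translation carrying the standard hexagon
(`c = 0`, `θ = 0`) to the given one also carries the standard half-planes to the given ones, so
it suffices to treat the standard hexagon. There, in the coordinates `(X, w) = (2 p₀, 2 p₁ / √3)`,
a point of the half-plane intersection is an explicit convex combination of the vertices: of the
right triangle when `X ≥ 1`, of the left one when `X ≤ -1`, and bilinearly of the four vertices of
the central rectangle otherwise.
-/

open Real Set

lemma cos_le_sqrt_three_div_two_of_cos_three_mul_eq_zero {x : ℝ} (h : cos (3 * x) = 0) :
    cos x ≤ √3 / 2 := by
  have hroots : cos x * (cos x - √3 / 2) * (cos x + √3 / 2) = 0 := by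
    have h3 : √3 ^ 2 = 3 := sq_sqrt (by norm_num)
    linear_combination (1 / 4) * (cos_three_mul x).symm.trans h - cos x * h3 / 4
  by_contra! hlt
  have hpos : 0 < cos x * (cos x - √3 / 2) * (cos x + √3 / 2) := by
    have : 0 < √3 / 2 := by positivity
    apply mul_pos (mul_pos _ _) _ <;> linarith
  exact hpos.ne' hroots

lemma cos_intCast_mul_pi_div_three_sub_pi_div_six_le (n : ℤ) :
    cos (n * (π / 3) - π / 6) ≤ √3 / 2 := by
  apply cos_le_sqrt_three_div_two_of_cos_three_mul_eq_zero
  rw [show 3 * (n * (π / 3) - π / 6) = n * π - π / 2 by ring, cos_sub_pi_div_two, sin_int_mul_pi]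

noncomputable def hexHalfPlanes (c : E2) (θ : ℝ) : Set E2 :=
  {p | ∀ j : Fin 6,
    sin (θ + j * (π / 3)) * p 0 + cos (θ + j * (π / 3)) * p 1 ≤
      sin (θ + j * (π / 3)) * c 0 + cos (θ + j * (π / 3)) * c 1 + √3 / 2}

lemma convex_hexHalfPlanes (c : E2) (θ : ℝ) : Convex ℝ (hexHalfPlanes c θ) := by
  simp only [hexHalfPlanes, ofPred_forall]
  refine convex_iInter fun j => convex_halfSpace_le ⟨fun p q => ?_, fun r p => ?_⟩ _ <;>
    simp only [PiLp.add_apply, PiLp.smul_apply, smul_eq_mul] <;> ring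

lemma hexagon_subset_hexHalfPlanes (c : E2) (θ : ℝ) : hexagon c θ 1 ⊆ hexHalfPlanes c θ := by
  refine convexHull_min ?_ (convex_hexHalfPlanes c θ)
  rintro _ ⟨k, rfl⟩ j
  have hangle :
      θ + j * (π / 3) - (θ + (k + 0.5) * (π / 3)) = ((j - k : ℤ) : ℝ) * (π / 3) - π / 6 := by
    push_cast; ring
  have hcos := cos_intCast_mul_pi_div_three_sub_pi_div_six_le (j - k)
  rw [← hangle, cos_sub] at hcos
  simp only [pt, one_smul, PiLp.add_apply, Matrix.cons_val_zero, Matrix.cons_val_one,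
    Matrix.cons_val_fin_one]
  linarith

noncomputable def planeRot (θ : ℝ) : E2 →ₗ[ℝ] E2 :=
  Matrix.toEuclideanLin !![cos θ, sin θ; -sin θ, cos θ]

lemma planeRot_apply (θ : ℝ) (v : E2) :
    planeRot θ v = pt (cos θ * v 0 + sin θ * v 1) (-sin θ * v 0 + cos θ * v 1) := by
  ext i; fin_cases i <;> simp [planeRot, pt, Matrix.mulVec, dotProduct, Fin.sum_univ_two]

lemma planeRot_pt_sin_cos (θ φ : ℝ) :
    planeRot θ (pt (sin φ) (cos φ)) = pt (sin (θ + φ)) (cos (θ + φ)) := by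
  rw [planeRot_apply, sin_add, cos_add]
  simp only [pt, Matrix.cons_val_zero, Matrix.cons_val_one, Matrix.cons_val_fin_one, PiLp.toLp_apply]
  ring_nf

lemma planeRot_planeRot_neg (θ : ℝ) (v : E2) : planeRot θ (planeRot (-θ) v) = v := by
  ext i
  fin_cases i <;>
    simp only [planeRot_apply, pt, cos_neg, sin_neg, neg_mul, neg_neg, PiLp.toLp_apply,
      Matrix.cons_val_zero, Matrix.cons_val_one, Matrix.cons_val_fin_one, Fin.zero_eta, Fin.mk_one]
  · linear_combination v 0 * sin_sq_add_cos_sq θ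
  · linear_combination v 1 * sin_sq_add_cos_sq θ

lemma sin_add_mul_planeRot_add_cos_add_mul_planeRot (θ α : ℝ) (v : E2) :
    sin (θ + α) * planeRot θ v 0 + cos (θ + α) * planeRot θ v 1 = sin α * v 0 + cos α * v 1 := by
  simp only [planeRot_apply, pt, PiLp.toLp_apply, Matrix.cons_val_zero, Matrix.cons_val_one,
    Matrix.cons_val_fin_one, sin_add, cos_add]
  linear_combination (sin α * v 0 + cos α * v 1) * sin_sq_add_cos_sq θ

noncomputable def hexPlacement (c : E2) (θ : ℝ) : E2 →ᵃ[ℝ] E2 :=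
  (planeRot θ).toAffineMap + AffineMap.const ℝ E2 c

lemma hexPlacement_apply (c : E2) (θ : ℝ) (q : E2) : hexPlacement c θ q = c + planeRot θ q :=
  add_comm _ _

lemma hexPlacement_surjective (c : E2) (θ : ℝ) : Function.Surjective (hexPlacement c θ) :=
  fun p => ⟨planeRot (-θ) (p - c), by rw [hexPlacement_apply, planeRot_planeRot_neg, add_sub_cancel]⟩

lemma hexagon_eq_image_hexPlacement (c : E2) (θ : ℝ) :
    hexagon c θ 1 = hexPlacement c θ '' hexagon 0 0 1 := by
  rw [hexagon, hexagon, AffineMap.image_convexHull, ← range_comp]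
  congr 2
  ext1 j
  simp [hexPlacement_apply, planeRot_pt_sin_cos]

lemma hexPlacement_mem_hexHalfPlanes_iff (c : E2) (θ : ℝ) (q : E2) :
    hexPlacement c θ q ∈ hexHalfPlanes c θ ↔ q ∈ hexHalfPlanes 0 0 := by
  refine forall_congr' fun j => ?_
  have := sin_add_mul_planeRot_add_cos_add_mul_planeRot θ (j * (π / 3)) q
  simp only [hexPlacement_apply, PiLp.add_apply, PiLp.zero_apply, zero_add, mul_zero]
  constructor <;> intro h <;> linarith

lemma sin_cos_natCast_mul_pi_div_three (j : Fin 6) :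
    sin (j * (π / 3)) = √3 / 2 * ![0, 1, 1, 0, -1, -1] j ∧
      cos (j * (π / 3)) = 1 / 2 * ![2, 1, -1, -2, -1, 1] j := by
  fin_cases j
  · norm_num
  · norm_num
  · norm_num [show (2 : ℝ) * (π / 3) = π - π / 3 by ring]
  · norm_num [show (3 : ℝ) * (π / 3) = π by ring]
  · norm_num [show (4 : ℝ) * (π / 3) = π / 3 + π by ring]
  · norm_num [show (5 : ℝ) * (π / 3) = 2 * π - π / 3 by ring]

lemma sin_cos_natCast_add_half_mul_pi_div_three (j : Fin 6) :
    sin ((j + 0.5) * (π / 3)) = 1 / 2 * ![1, 2, 1, -1, -2, -1] j ∧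
      cos ((j + 0.5) * (π / 3)) = √3 / 2 * ![1, 0, -1, -1, 0, 1] j := by
  fin_cases j
  · norm_num [show (1 / 2 : ℝ) * (π / 3) = π / 6 by ring]
  · norm_num [show (3 / 2 : ℝ) * (π / 3) = π / 2 by ring]
  · norm_num [show (5 / 2 : ℝ) * (π / 3) = π - π / 6 by ring]
  · norm_num [show (7 / 2 : ℝ) * (π / 3) = π / 6 + π by ring]
  · norm_num [show (9 / 2 : ℝ) * (π / 3) = π / 2 + π by ring]
  · norm_num [show (11 / 2 : ℝ) * (π / 3) = 2 * π - π / 6 by ring]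

/-- In the coordinates `(X, w) = (2 p₀, 2 p₁ / √3)` the vertices of `hexagon 0 0 1` are
`(1, 1), (2, 0), (1, -1), (-1, -1), (-2, 0), (-1, 1)`. -/
lemma pt_mem_hexagon_zero_of_weights {X w l₀ l₁ l₂ l₃ l₄ l₅ : ℝ}
    (h₀ : 0 ≤ l₀) (h₁ : 0 ≤ l₁) (h₂ : 0 ≤ l₂) (h₃ : 0 ≤ l₃) (h₄ : 0 ≤ l₄) (h₅ : 0 ≤ l₅)
    (hsum : l₀ + l₁ + l₂ + l₃ + l₄ + l₅ = 1)
    (hX : l₀ + 2 * l₁ + l₂ - l₃ - 2 * l₄ - l₅ = X) (hw : l₀ - l₂ - l₃ + l₅ = w) :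
    pt (X / 2) (√3 / 2 * w) ∈ hexagon 0 0 1 := by
  set l := ![l₀, l₁, l₂, l₃, l₄, l₅]
  refine mem_convexHull_of_exists_fintype l _ ?_ (by simpa [l, Fin.sum_univ_six] using hsum)
    (fun j => mem_range_self j) ?_
  · intro j; fin_cases j <;> assumption
  simp only [zero_add, one_smul, (sin_cos_natCast_add_half_mul_pi_div_three _).1,
    (sin_cos_natCast_add_half_mul_pi_div_three _).2]
  rw [← hX, ← hw, Fin.sum_univ_six]
  ext i
  fin_cases i <;>
    simp only [l, pt, PiLp.add_apply, PiLp.smul_apply, PiLp.toLp_apply, smul_eq_mul, Fin.isValue,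
      Fin.zero_eta, Fin.mk_one, Matrix.cons_val, Matrix.cons_val_zero, Matrix.cons_val_one] <;>
    ring

lemma pt_mem_hexagon_zero {X w : ℝ} (h₀ : 2 * w ≤ 2) (h₁ : X + w ≤ 2) (h₂ : X - w ≤ 2)
    (h₃ : -(2 * w) ≤ 2) (h₄ : -X - w ≤ 2) (h₅ : -X + w ≤ 2) :
    pt (X / 2) (√3 / 2 * w) ∈ hexagon 0 0 1 := by
  rcases le_total 1 X with hX | hX
  · exact pt_mem_hexagon_zero_of_weights (l₀ := (2 - X + w) / 2) (l₁ := X - 1)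
      (l₂ := (2 - X - w) / 2) (l₃ := 0) (l₄ := 0) (l₅ := 0)
      (by linarith) (by linarith) (by linarith) le_rfl le_rfl le_rfl (by ring) (by ring) (by ring)
  rcases le_total X (-1) with hX' | hX'
  · exact pt_mem_hexagon_zero_of_weights (l₀ := 0) (l₁ := 0) (l₂ := 0)
      (l₃ := (2 + X - w) / 2) (l₄ := -X - 1) (l₅ := (2 + X + w) / 2)
      le_rfl le_rfl le_rfl (by linarith) (by linarith) (by linarith) (by ring) (by ring) (by ring)
  · exact pt_mem_hexagon_zero_of_weights (l₀ := (1 + X) * (1 + w) / 4) (l₁ := 0)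
      (l₂ := (1 + X) * (1 - w) / 4) (l₃ := (1 - X) * (1 - w) / 4) (l₄ := 0)
      (l₅ := (1 - X) * (1 + w) / 4)
      (by nlinarith) le_rfl (by nlinarith) (by nlinarith) le_rfl (by nlinarith)
      (by ring) (by ring) (by ring)

lemma hexHalfPlanes_zero_subset_hexagon : hexHalfPlanes 0 0 ⊆ hexagon 0 0 1 := by
  intro q hq
  have hlin (j : Fin 6) :
      ![0, 1, 1, 0, -1, -1] j * (2 * q 0) + ![2, 1, -1, -2, -1, 1] j * (2 * q 1 / √3) ≤ 2 := by
    obtain ⟨hsin, hcos⟩ := sin_cos_natCast_mul_pi_div_three j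
    have := hq j
    simp only [zero_add, hsin, hcos, PiLp.zero_apply, mul_zero] at this
    field_simp
    linarith
  have hq' : q = pt (2 * q 0 / 2) (√3 / 2 * (2 * q 1 / √3)) := by
    field_simp
    ext i; fin_cases i <;> rfl
  rw [hq']
  exact pt_mem_hexagon_zero (by simpa using hlin 0) (by simpa using hlin 1) (by simpa using hlin 2)
    (by simpa using hlin 3) (by simpa using hlin 4) (by simpa using hlin 5)

lemma hexHalfPlanes_subset_hexagon (c : E2) (θ : ℝ) : hexHalfPlanes c θ ⊆ hexagon c θ 1 := by
  intro p hp
  obtain ⟨q, rfl⟩ := hexPlacement_surjective c θ p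
  rw [hexagon_eq_image_hexPlacement]
  exact mem_image_of_mem _
    (hexHalfPlanes_zero_subset_hexagon ((hexPlacement_mem_hexHalfPlanes_iff c θ q).1 hp))

/-- Half-space representation of the rotated, translated unit regular hexagon. -/
theorem stmt_14 (c : E2) (θ : ℝ) :
    hexagon c θ 1 =
      {p : E2 | ∀ j : Fin 6,
        Real.sin (θ + (j : ℝ) * (Real.pi / 3)) * p 0 +
          Real.cos (θ + (j : ℝ) * (Real.pi / 3)) * p 1 ≤
        Real.sin (θ + (j : ℝ) * (Real.pi / 3)) * c 0 +
          Real.cos (θ + (j : ℝ) * (Real.pi / 3)) * c 1 + Real.sqrt 3 / 2} :=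
  (hexagon_subset_hexHalfPlanes c θ).antisymm (hexHalfPlanes_subset_hexagon c θ)
end
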